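/- Suppose n > 500 is an extraordinary number whose largest prime factor is p. Then p < log n and gcd(n/p, p) = 1 (i.e. p^2 does not divide n). -/

import Mathlib

/-- Sum of the positive divisors of `n`. -/
def sigma1 (n : ℕ) : ℕ := ∑ d ∈ n.divisors, d

/-- `G n = σ(n) / (n · log log n)`. -/
noncomputable def G (n : ℕ) : ℝ := (sigma1 n : ℝ) / ((n : ℝ) * Real.log (Real.log n))

/-- `n` is a GA1 number: composite and `G n ≥ G (n/p)` for every prime `p ∣ n`. -/
def GA1 (n : ℕ) : Prop :=
  1 < n ∧ ¬ n.Prime ∧ ∀ p : ℕ, p.Prime → p ∣ n → G (n / p) ≤ G n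

/-- `n` is a GA2 number: `n > 1` and `G n ≥ G (c·n)` for all positive integers `c`. -/
def GA2 (n : ℕ) : Prop :=
  1 < n ∧ ∀ c : ℕ, 0 < c → G (c * n) ≤ G n

/-- `n` is extraordinary: both GA1 and GA2. -/
def Extraordinary (n : ℕ) : Prop := GA1 n ∧ GA2 n

/-!
GA2 with `c = q`, a prime not dividing `n`, gives `log n · log log n ≤ q log q`; hence every
prime below `log n` divides `n`, in particular `2, 3, 5 ∣ n`. GA1 at `p` gives
`p · log log n · σ(n/p) ≤ log log (n/p) · σ(n)`, while
`log log n - log log (n/p) > log p / log n`. With `σ(n) ≤ (p + 1) σ(n/p)` this yields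
`p log p < log n · log log n`, so `p < log n`. If `p² ∣ n`, the sharper
`(p + 1) σ(n) ≤ (p² + p + 1) σ(n/p)` yields `p (p + 1) log p < log n · log log n`,
contradicting the GA2 bound at a Bertrand prime `q ∈ (p, 2p]`, which cannot divide `n`.
-/

open Real
open scoped ArithmeticFunction.sigma

theorem sigma1_eq_sigma_one (n : ℕ) : sigma1 n = σ 1 n :=
  (ArithmeticFunction.sigma_one_apply n).symm

namespace ArithmeticFunction

theorem sigma_one_le_of_dvd {m n : ℕ} (h : m ∣ n) (hn : n ≠ 0) : σ 1 m ≤ σ 1 n := by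
  simp only [sigma_one_apply]
  exact Finset.sum_le_sum_of_subset (Nat.divisors_subset_of_dvd hn h)

theorem sigma_one_prime_pow_succ {p : ℕ} (hp : p.Prime) (k : ℕ) :
    σ 1 (p ^ (k + 1)) = p * σ 1 (p ^ k) + 1 := by
  rw [sigma_one_apply_prime_pow hp, sigma_one_apply_prime_pow hp, Finset.sum_range_succ',
    Finset.mul_sum]
  simp [pow_succ']

theorem sigma_one_prime_mul {p M : ℕ} (hp : p.Prime) (hM : M ≠ 0) :
    σ 1 (p * M) = p * σ 1 M + σ 1 (ordCompl[p] M) := by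
  have hcop (k : ℕ) : (p ^ k).Coprime (ordCompl[p] M) := (Nat.coprime_ordCompl hp hM).pow_left k
  have hsplit := Nat.ordProj_mul_ordCompl_eq_self M p
  set m := ordCompl[p] M
  set k := M.factorization p
  rw [← hsplit, ← mul_assoc, ← pow_succ', isMultiplicative_sigma.map_mul_of_coprime (hcop _),
    isMultiplicative_sigma.map_mul_of_coprime (hcop _), sigma_one_prime_pow_succ hp]
  ring

theorem sigma_one_prime_mul_of_not_dvd {p M : ℕ} (hp : p.Prime) (hpM : ¬ p ∣ M) :
    σ 1 (p * M) = (p + 1) * σ 1 M := by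
  rcases eq_or_ne M 0 with rfl | hM
  · simp
  rw [sigma_one_prime_mul hp hM, (Nat.ordCompl_eq_self_iff_zero_or_not_dvd M hp).mpr (.inr hpM)]
  ring

theorem sigma_one_prime_mul_le {p : ℕ} (hp : p.Prime) (M : ℕ) :
    σ 1 (p * M) ≤ (p + 1) * σ 1 M := by
  rcases eq_or_ne M 0 with rfl | hM
  · simp
  rw [sigma_one_prime_mul hp hM, add_mul, one_mul]
  exact Nat.add_le_add_left (sigma_one_le_of_dvd (Nat.ordCompl_dvd M p) hM) _

theorem succ_mul_sigma_one_prime_mul_le {p M : ℕ} (hp : p.Prime) (hpM : p ∣ M) :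
    (p + 1) * σ 1 (p * M) ≤ (p ^ 2 + p + 1) * σ 1 M := by
  rcases eq_or_ne M 0 with rfl | hM
  · simp
  have hdvd : p * ordCompl[p] M ∣ M := by
    conv_rhs => rw [← Nat.ordProj_mul_ordCompl_eq_self M p]
    exact mul_dvd_mul_right (dvd_pow_self p (hp.factorization_pos_of_dvd hM hpM).ne') _
  -- with `m = ordCompl[p] M`, prime to `p`: `(p + 1) σ(m) = σ(p m) ≤ σ(M)`
  have h := sigma_one_le_of_dvd hdvd hM
  rw [sigma_one_prime_mul_of_not_dvd hp (Nat.not_dvd_ordCompl hp hM)] at h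
  rw [sigma_one_prime_mul hp hM]
  nlinarith

end ArithmeticFunction

theorem mem_Ici_exp_neg_one {x : ℝ} (hx : 1 ≤ x) : x ∈ Set.Ici (exp (-1)) :=
  Set.mem_Ici.mpr (by linarith [exp_neg_one_lt_half])

theorem div_lt_log_sub_log_sub {x L : ℝ} (hx : 0 < x) (hxL : x < L) :
    x / L < log L - log (L - x) := by
  have hL : 0 < L := hx.trans hxL
  have h := log_lt_sub_one_of_pos (div_pos (sub_pos.mpr hxL) hL)
    (by rw [Ne, div_eq_one_iff_eq hL.ne']; linarith)
  rw [log_div (sub_pos.mpr hxL).ne' hL.ne'] at h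
  have : (L - x) / L - 1 = -(x / L) := by field_simp; ring
  linarith

theorem mul_log_le_of_succ_mul_log_le {L x y : ℝ} (hL : 0 < L) (hx : 0 ≤ x) (hy : 0 ≤ y)
    (h : (x + 1) * log L ≤ x * log (L + y)) : L * log L ≤ x * y := by
  have hLy : log (L + y) - log L ≤ y / L := by
    rw [← log_div (by positivity) hL.ne']
    calc log ((L + y) / L) ≤ (L + y) / L - 1 := log_le_sub_one_of_pos (by positivity)
      _ = y / L := by field_simp; ring
  have : log L ≤ x * y / L := by
    calc log L ≤ x * (log (L + y) - log L) := by linarith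
      _ ≤ x * (y / L) := mul_le_mul_of_nonneg_left hLy hx
      _ = x * y / L := by ring
  rwa [le_div_iff₀ hL, mul_comm] at this

theorem mul_log_le_mul_succ_mul_log {L p : ℝ} (hp : 3 ≤ p) (hL : 1 ≤ L) (hLp : L ≤ 2 * p) :
    L * log L ≤ p * (p + 1) * log p := by
  have hmono := mul_log_strictMonoOn.monotoneOn (mem_Ici_exp_neg_one hL)
    (mem_Ici_exp_neg_one (by linarith)) hLp
  have hlog2 : log (2 * p) = log 2 + log p := log_mul two_ne_zero (by positivity)
  have h23 : log 2 < log p := log_lt_log two_pos (by linarith)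
  have h2 : 0 < log 2 := log_pos one_lt_two
  have : 2 * log 2 ≤ (p - 1) * log p := by nlinarith
  calc L * log L ≤ 2 * p * log (2 * p) := hmono
    _ = p * (2 * log 2 + 2 * log p) := by rw [hlog2]; ring
    _ ≤ p * ((p - 1) * log p + 2 * log p) := by gcongr
    _ = p * (p + 1) * log p := by ring

theorem sigma1_mul_le_of_G_le {m n : ℕ} (hm : 0 < log (log m)) (hn : 0 < log (log n))
    (h : G m ≤ G n) : (sigma1 m : ℝ) * n * log (log n) ≤ sigma1 n * m * log (log m) := by
  have hpos (k : ℕ) (hk : 0 < log (log k)) : (0 : ℝ) < k := by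
    rcases Nat.eq_zero_or_pos k with rfl | hk0
    · simp at hk
    · exact_mod_cast hk0
  unfold G at h
  rw [div_le_div_iff₀ (mul_pos (hpos m hm) hm) (mul_pos (hpos n hn) hn)] at h
  linarith

theorem sigma1_pos {n : ℕ} (hn : n ≠ 0) : (0 : ℝ) < sigma1 n := by
  rw [sigma1_eq_sigma_one]; exact_mod_cast ArithmeticFunction.sigma_pos 1 n hn

theorem GA2.log_mul_log_log_le {n q : ℕ} (h : GA2 n) (hq : q.Prime) (hqn : ¬ q ∣ n)
    (hL : 1 < log n) : log n * log (log n) ≤ q * log q := by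
  have hn0 : 0 < n := zero_lt_one.trans h.1
  have hn : (0 : ℝ) < n := by exact_mod_cast hn0
  have hq0 : (0 : ℝ) < q := by exact_mod_cast hq.pos
  have hσ : (sigma1 (q * n) : ℝ) = (q + 1) * sigma1 n := by
    rw [sigma1_eq_sigma_one, sigma1_eq_sigma_one,
      ArithmeticFunction.sigma_one_prime_mul_of_not_dvd hq hqn]
    push_cast; ring
  have hlog : log ((q * n : ℕ) : ℝ) = log n + log q := by
    push_cast; rw [log_mul hq0.ne' hn.ne', add_comm]
  have hlogq : 0 ≤ log q := log_nonneg (by exact_mod_cast hq.one_le)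
  have hcross := sigma1_mul_le_of_G_le (by rw [hlog]; exact log_pos (by linarith)) (log_pos hL)
    (h.2 q hq.pos)
  rw [hσ, hlog] at hcross
  push_cast at hcross
  refine mul_log_le_of_succ_mul_log_le (by linarith) hq0.le hlogq ?_
  have hσn : 0 < (sigma1 n : ℝ) * n := mul_pos (sigma1_pos (by omega)) hn
  nlinarith

theorem GA2.log_le_of_not_dvd {n q : ℕ} (h : GA2 n) (hq : q.Prime) (hqn : ¬ q ∣ n) :
    log n ≤ q := by
  by_contra! hlt
  have hq1 : (1 : ℝ) < q := by exact_mod_cast hq.one_lt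
  have hle := h.log_mul_log_log_le hq hqn (hq1.trans hlt)
  have := mul_log_strictMonoOn (mem_Ici_exp_neg_one hq1.le)
    (mem_Ici_exp_neg_one (hq1.trans hlt).le) hlt
  simp only at this
  linarith

theorem mul_log_lt_of_G_le {p M : ℕ} (hp : 1 < p) (hM : 3 ≤ M) (hG : G M ≤ G (p * M))
    {a b : ℝ} (ha : 0 < a) (hσ : a * σ 1 (p * M) ≤ b * σ 1 M) :
    p * a * log p < (b - p * a) * (log (p * M : ℕ) * log (log (p * M : ℕ))) := by
  set L := log ((p * M : ℕ) : ℝ)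
  have hp0 : (0 : ℝ) < p := by positivity
  have hM0 : (0 : ℝ) < M := by positivity
  have hlogp : 0 < log p := log_pos (by exact_mod_cast hp)
  have hlogM : 1 < log M := by
    rw [lt_log_iff_exp_lt hM0]
    exact exp_one_lt_three.trans_le (by exact_mod_cast hM)
  have hL : L = log p + log M := by simp only [L]; push_cast; exact log_mul hp0.ne' hM0.ne'
  have hLpos : 0 < L := by linarith
  have hl' : 0 < log (log M) := log_pos hlogM
  have hl'l : log (log M) < log L := log_lt_log (by linarith) (by linarith)
  have hcross := sigma1_mul_le_of_G_le hl' (hl'.trans hl'l) hG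
  rw [sigma1_eq_sigma_one, sigma1_eq_sigma_one] at hcross
  have hσM : (0 : ℝ) < σ 1 M := by exact_mod_cast ArithmeticFunction.sigma_pos 1 M (by omega)
  have h1 : p * a * log L ≤ b * log (log M) := by
    refine le_of_mul_le_mul_right ?_ (mul_pos hσM hM0)
    calc p * a * log L * (σ 1 M * M) = a * (σ 1 M * (p * M : ℕ) * log L) := by
          push_cast; ring
      _ ≤ a * (σ 1 (p * M) * M * log (log M)) := by gcongr
      _ = a * σ 1 (p * M) * (M * log (log M)) := by ring
      _ ≤ b * σ 1 M * (M * log (log M)) := by gcongr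
      _ = b * log (log M) * (σ 1 M * M) := by ring
  have hb : p * a ≤ b :=
    (lt_of_mul_lt_mul_right ((mul_lt_mul_of_pos_left hl'l (by positivity)).trans_le h1) hl'.le).le
  -- `log L - log (log M) = -log (1 - log p / L)` exceeds `log p / L`
  have hkey := div_lt_log_sub_log_sub hlogp (show log p < L by linarith)
  rw [show L - log p = log M by linarith] at hkey
  calc p * a * log p = p * a * L * (log p / L) := by field_simp
    _ < p * a * L * (log L - log (log M)) := by gcongr
    _ = L * (p * a * log L - p * a * log (log M)) := by ring
    _ ≤ L * ((b - p * a) * log (log M)) := by gcongr; linarith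
    _ ≤ L * ((b - p * a) * log L) := by gcongr
    _ = (b - p * a) * (L * log L) := by ring

theorem lt_log_of_G_le {p M : ℕ} (hp : p.Prime) (hM : 3 ≤ M) (hG : G M ≤ G (p * M))
    (hL : 1 ≤ log (p * M : ℕ)) : (p : ℝ) < log (p * M : ℕ) := by
  have h := mul_log_lt_of_G_le hp.one_lt hM hG one_pos (b := p + 1)
    (by exact_mod_cast (one_mul _).trans_le (ArithmeticFunction.sigma_one_prime_mul_le hp M))
  rw [mul_one, add_sub_cancel_left, one_mul] at h
  have hp1 : (1 : ℝ) ≤ p := by exact_mod_cast hp.one_le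
  exact (mul_log_strictMonoOn.lt_iff_lt (mem_Ici_exp_neg_one hp1) (mem_Ici_exp_neg_one hL)).mp h

theorem coprime_of_G_le {p M : ℕ} (hp : p.Prime) (hp3 : 3 ≤ p) (hM : 3 ≤ M)
    (hG : G M ≤ G (p * M)) (hL : 1 ≤ log (p * M : ℕ)) (hLp : log (p * M : ℕ) ≤ 2 * p) :
    M.Coprime p := by
  refine Nat.Coprime.symm ((Nat.Prime.coprime_iff_not_dvd hp).mpr fun hpM => ?_)
  have h := mul_log_lt_of_G_le hp.one_lt hM hG (a := p + 1) (b := p ^ 2 + p + 1)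
    (by positivity)
    (by exact_mod_cast ArithmeticFunction.succ_mul_sigma_one_prime_mul_le hp hpM)
  rw [show (p ^ 2 + p + 1 : ℝ) - p * (p + 1) = 1 by ring, one_mul] at h
  have := mul_log_le_mul_succ_mul_log (by exact_mod_cast hp3) hL hLp
  linarith

/-- If `n > 500` is extraordinary with largest prime factor `p`, then
`p < log n` and `gcd(n/p, p) = 1`. -/
theorem extraordinary_largest_prime_factor (n p : ℕ) (hn : 500 < n)
    (hext : Extraordinary n) (hp : p.Prime) (hpn : p ∣ n)
    (hmax : ∀ q : ℕ, q.Prime → q ∣ n → q ≤ p) :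
    (p : ℝ) < Real.log n ∧ Nat.gcd (n / p) p = 1 := by
  obtain ⟨⟨-, -, hGA1⟩, hGA2⟩ := hext
  have hL : 5 < log n := by
    rw [lt_log_iff_exp_lt (by positivity)]
    calc exp 5 = exp 1 ^ 5 := by rw [exp_one_pow]; norm_num
      _ < 3 ^ 5 := by gcongr; exact exp_one_lt_three
      _ < n := by norm_num; exact_mod_cast (by omega : 243 < n)
  have hsmall (q : ℕ) (hq : q.Prime) (hq5 : q ≤ 5) : q ∣ n := by
    by_contra hqn
    have := hGA2.log_le_of_not_dvd hq hqn
    have : (q : ℝ) ≤ 5 := by exact_mod_cast hq5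
    linarith
  have hp5 : 5 ≤ p := hmax 5 Nat.prime_five (hsmall 5 Nat.prime_five le_rfl)
  obtain ⟨M, rfl⟩ := hpn
  have h6M : 2 * 3 ∣ M :=
    Nat.Coprime.dvd_of_dvd_mul_left
      (((Nat.coprime_primes Nat.prime_two hp).mpr (by omega)).mul_left
        ((Nat.coprime_primes Nat.prime_three hp).mpr (by omega)))
      (Nat.Coprime.mul_dvd_of_dvd_of_dvd (by norm_num)
        (hsmall 2 Nat.prime_two (by norm_num)) (hsmall 3 Nat.prime_three (by norm_num)))
  have hM : 3 ≤ M :=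
    (Nat.le_of_dvd (Nat.pos_of_ne_zero (by rintro rfl; simp at hn)) h6M).trans' (by norm_num)
  have hG := hGA1 p hp (dvd_mul_right p M)
  rw [Nat.mul_div_cancel_left M hp.pos] at hG ⊢
  obtain ⟨q, hq, hpq, hq2p⟩ := Nat.exists_prime_lt_and_le_two_mul p hp.ne_zero
  have hLq := hGA2.log_le_of_not_dvd hq fun hqn => (hmax q hq hqn).not_gt hpq
  exact ⟨lt_log_of_G_le hp hM hG (by linarith),
    coprime_of_G_le hp (by omega) hM hG (by linarith) (hLq.trans (by exact_mod_cast hq2p))⟩
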